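/- arXiv:2103.08293 — 2 statements merged into one kernel-verified Lean document; each statement's English description precedes it below -/
import Mathlib

section
/- Let A, B be matrices with A ∈ ℝ^{n×n} and B ∈ ℝ^{n×1}, and let Ã ∈ ℝ^{n×n}. If both pairs (A,B) and (Ã,B) satisfy the Kalman rank condition (i.e., are controllable), then there exists a unique pair (T,K) with T ∈ ℝ^{n×n} invertible and K ∈ ℝ^{1×n} such that T·A + B·K = Ã·T and T·B = B. -/
/-!
The conditions on `(T, K)` are `n² + n` linear equations in `n² + n` unknowns, so it suffices
that the homogeneous system `T A + B K = Ã T`, `T B = 0` has only the trivial solution; the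
solution `T` of the inhomogeneous system is then invertible because
`T · kalman(A + B K, B) = kalman(Ã, B)`.

For the homogeneous system, `v j = T Aʲ B` satisfies `v 0 = 0`, `v (j + 1) = Ã v j - kⱼ B` with
`kⱼ = K Aʲ B`, and `v n` lies in the span of `v 0, …, v (n - 1)` because the `Aʲ B` span `ℝⁿ`.
If `kᵢ` is the first nonzero coefficient, `v (i + 1 + d)` is `-kᵢ Ãᵈ B` modulo the Krylov space
`span {Ãᵐ B | m < d}`, so `v n` can only lie in `span {Ãᵐ B | m < n - 1 - i}` if `Ãⁿ⁻¹⁻ⁱ B`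
does, contradicting the linear independence of `B, Ã B, …, Ãⁿ⁻¹ B`. Hence `K` and `T` vanish
on the Kalman basis of `A`.
-/

/-- The Kalman controllability matrix `[B, AB, ..., A^{n-1}B]`. -/
def kalmanMatrix {n : ℕ} (A : Matrix (Fin n) (Fin n) ℝ) (B : Matrix (Fin n) (Fin 1) ℝ) :
    Matrix (Fin n) (Fin n) ℝ :=
  Matrix.of fun i j => (A ^ (j : ℕ) * B) i 0

/-- A pair `(A, B)` is controllable if its Kalman matrix has full rank. -/
def IsControllable {n : ℕ} (A : Matrix (Fin n) (Fin n) ℝ) (B : Matrix (Fin n) (Fin 1) ℝ) : Prop :=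
  (kalmanMatrix A B).rank = n

open Matrix Submodule

section Krylov

variable {R V : Type*}

section Semiring

variable [Semiring R] [AddCommMonoid V] [Module R V] (f : Module.End R V) (b : V)

def krylovSubspace (m : ℕ) : Submodule R V :=
  span R ((fun i => (f ^ i) b) '' Set.Iio m)

theorem krylovSubspace_mono : Monotone (krylovSubspace f b) :=
  fun _ _ h => span_mono (Set.image_mono (Set.Iio_subset_Iio h))

theorem pow_apply_mem_krylovSubspace {i m : ℕ} (h : i < m) : (f ^ i) b ∈ krylovSubspace f b m :=
  subset_span ⟨i, h, rfl⟩

theorem apply_mem_krylovSubspace_succ {x : V} {m : ℕ} (hx : x ∈ krylovSubspace f b m) :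
    f x ∈ krylovSubspace f b (m + 1) := by
  refine span_induction ?_ (by simp) (fun x y _ _ hx hy => by simpa using add_mem hx hy)
    (fun c x _ hx => by simpa using smul_mem _ c hx) hx
  rintro _ ⟨i, hi, rfl⟩
  rw [← Module.End.mul_apply, ← pow_succ']
  exact pow_apply_mem_krylovSubspace f b (Nat.succ_lt_succ hi)

end Semiring

section Ring

variable [Ring R] [AddCommGroup V] [Module R V] {f : Module.End R V} {b : V}
  {k : ℕ → R} {v : ℕ → V}

theorem eq_zero_of_forall_lt_eq_zero (hv0 : v 0 = 0) (hv : ∀ j, v (j + 1) = f (v j) - k j • b)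
    {m : ℕ} (hk : ∀ i < m, k i = 0) : ∀ j ≤ m, v j = 0 := by
  intro j
  induction j with
  | zero => exact fun _ => hv0
  | succ j ih => intro hj; rw [hv, ih (by omega), hk j (by omega)]; simp

theorem add_smul_pow_apply_mem_krylovSubspace (hv : ∀ j, v (j + 1) = f (v j) - k j • b)
    {i : ℕ} (hvi : v i = 0) (d : ℕ) : v (i + 1 + d) + k i • (f ^ d) b ∈ krylovSubspace f b d := by
  induction d with
  | zero => simp [hv, hvi]
  | succ d ih =>
    have hrec : v (i + 1 + (d + 1)) + k i • (f ^ (d + 1)) b =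
        f (v (i + 1 + d) + k i • (f ^ d) b) - k (i + 1 + d) • b := by
      rw [← add_assoc, hv, map_add, map_smul, pow_succ', Module.End.mul_apply]
      abel
    rw [hrec]
    exact sub_mem (apply_mem_krylovSubspace_succ f b ih)
      (smul_mem _ _ (pow_apply_mem_krylovSubspace f b (i := 0) d.succ_pos))

end Ring

section DivisionRing

variable [DivisionRing R] [AddCommGroup V] [Module R V] {f : Module.End R V} {b : V}
  {k : ℕ → R} {v : ℕ → V} {n : ℕ}

theorem forall_lt_eq_zero_of_mem_span (hb : ∀ m < n, (f ^ m) b ∉ krylovSubspace f b m)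
    (hv0 : v 0 = 0) (hv : ∀ j, v (j + 1) = f (v j) - k j • b)
    (hvn : v n ∈ span R (v '' Set.Iio n)) : ∀ i < n, k i = 0 := by
  intro i
  induction i using Nat.strong_induction_on with
  | _ i ih =>
  intro hi
  have hvi := eq_zero_of_forall_lt_eq_zero hv0 hv (fun i' hi' => ih i' hi' (by omega))
  have hlead := add_smul_pow_apply_mem_krylovSubspace hv (hvi i le_rfl)
  have hmem : ∀ j, v j ∈ krylovSubspace f b (j - i) := by
    intro j
    rcases le_or_gt j i with hj | hj
    · simp [hvi j hj]
    obtain ⟨d, rfl⟩ : ∃ d, j = i + 1 + d := ⟨j - i - 1, by omega⟩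
    rw [show i + 1 + d - i = d + 1 by omega]
    simpa using sub_mem (krylovSubspace_mono f b d.le_succ (hlead d))
      (smul_mem _ (k i) (pow_apply_mem_krylovSubspace f b d.lt_succ_self))
  have hvn' : v n ∈ krylovSubspace f b (n - 1 - i) := by
    refine span_le.mpr ?_ hvn
    rintro _ ⟨j, hj, rfl⟩
    exact krylovSubspace_mono f b (by simp at hj; omega) (hmem j)
  have hlast := hlead (n - 1 - i)
  rw [show i + 1 + (n - 1 - i) = n by omega] at hlast
  by_contra hki
  exact hb (n - 1 - i) (by omega) ((smul_mem_iff _ hki).mp (by simpa using sub_mem hlast hvn'))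

end DivisionRing

end Krylov

theorem mulVec_eq_smul_col_zero {R m : Type*} [CommSemiring R] (B : Matrix m (Fin 1) R)
    (y : Fin 1 → R) : B *ᵥ y = y 0 • B.col 0 := by
  ext i
  simp [mulVec, dotProduct, mul_comm]

section Kalman

variable {n : ℕ} {A A' T : Matrix (Fin n) (Fin n) ℝ} {B : Matrix (Fin n) (Fin 1) ℝ}

theorem kalmanMatrix_col (A : Matrix (Fin n) (Fin n) ℝ) (B : Matrix (Fin n) (Fin 1) ℝ)
    (j : Fin n) : (kalmanMatrix A B).col j = (toLin' A ^ (j : ℕ)) (B.col 0) := by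
  rw [← toLin'_pow, toLin'_apply]
  rfl

theorem IsControllable.krylovSubspace_eq_top (h : IsControllable A B) :
    krylovSubspace (toLin' A) (B.col 0) n = ⊤ := by
  have hcols : span ℝ (Set.range (kalmanMatrix A B).col) = ⊤ :=
    eq_top_of_finrank_eq (by rw [← rank_eq_finrank_span_cols, h, Module.finrank_fin_fun])
  refine eq_top_iff.mpr (hcols ▸ span_mono ?_)
  rintro _ ⟨j, rfl⟩
  exact ⟨j, j.isLt, (kalmanMatrix_col A B j).symm⟩

theorem IsControllable.isUnit (h : IsControllable A B) : IsUnit (kalmanMatrix A B) := by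
  rw [← mulVec_surjective_iff_isUnit, ← coe_mulVecLin, ← LinearMap.range_eq_top,
    range_mulVecLin]
  exact eq_top_iff.mpr (h.krylovSubspace_eq_top ▸ span_le.mpr (by
    rintro _ ⟨j, hj, rfl⟩
    exact subset_span ⟨⟨j, hj⟩, kalmanMatrix_col A B ⟨j, hj⟩⟩))

theorem IsControllable.pow_apply_notMem_krylovSubspace (h : IsControllable A B) {m : ℕ}
    (hm : m < n) : (toLin' A ^ m) (B.col 0) ∉ krylovSubspace (toLin' A) (B.col 0) m := by
  have hli := linearIndependent_cols_iff_isUnit.mpr h.isUnit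
  have himage : (kalmanMatrix A B).col '' {j | (j : ℕ) < m} =
      (fun i => (toLin' A ^ i) (B.col 0)) '' Set.Iio m := by
    ext x
    simp only [Set.mem_image, Set.mem_ofPred_eq, Set.mem_Iio, kalmanMatrix_col]
    exact ⟨fun ⟨j, hj, hx⟩ => ⟨j, hj, hx⟩, fun ⟨i, hi, hx⟩ => ⟨⟨i, by omega⟩, hi, hx⟩⟩
  have := hli.notMem_span_image (x := ⟨m, hm⟩) (s := {j | (j : ℕ) < m}) (by simp)
  rwa [himage, kalmanMatrix_col] at this

theorem IsControllable.eq_zero_of_mulVec_eq_zero (h : IsControllable A B) {p : Type*}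
    {M : Matrix p (Fin n) ℝ} (hM : ∀ j < n, M *ᵥ (toLin' A ^ j) (B.col 0) = 0) : M = 0 := by
  have hMC : M * kalmanMatrix A B = 0 := by
    ext i j
    exact congrFun (kalmanMatrix_col A B j ▸ hM j j.isLt) i
  have hdet : IsUnit (kalmanMatrix A B).det := (isUnit_iff_isUnit_det _).mp h.isUnit
  rw [← mul_nonsing_inv_cancel_right _ M hdet, hMC, Matrix.zero_mul]

theorem mul_kalmanMatrix_of_semiconjBy (hT : SemiconjBy T A A') (hB : T * B = B) :
    T * kalmanMatrix A B = kalmanMatrix A' B := by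
  ext i j
  have hpow : T * (A ^ (j : ℕ) * B) = A' ^ (j : ℕ) * B := by
    rw [← Matrix.mul_assoc, (hT.pow_right j).eq, Matrix.mul_assoc, hB]
  exact congrFun (congrFun hpow i) 0

theorem IsControllable.isUnit_of_feedback {K : Matrix (Fin 1) (Fin n) ℝ}
    (hA' : IsControllable A' B) (hTK : T * A + B * K = A' * T) (hTB : T * B = B) : IsUnit T := by
  have hT : SemiconjBy T (A + B * K) A' := by
    rw [SemiconjBy, Matrix.mul_add, ← Matrix.mul_assoc, hTB, hTK]
  exact isUnit_of_mul_isUnit_left (mul_kalmanMatrix_of_semiconjBy hT hTB ▸ hA'.isUnit)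

end Kalman

section Feedback

variable {n : ℕ}

def feedbackMap (A A' : Matrix (Fin n) (Fin n) ℝ) (B : Matrix (Fin n) (Fin 1) ℝ) :
    Matrix (Fin n) (Fin n) ℝ × Matrix (Fin 1) (Fin n) ℝ →ₗ[ℝ]
      Matrix (Fin n) (Fin n) ℝ × Matrix (Fin n) (Fin 1) ℝ where
  toFun TK := (TK.1 * A + B * TK.2 - A' * TK.1, TK.1 * B)
  map_add' TK TK' := by
    simp only [Prod.fst_add, Prod.snd_add, Matrix.add_mul, Matrix.mul_add, Prod.mk_add_mk]
    congr 1
    abel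
  map_smul' c TK := by
    simp only [Prod.smul_fst, Prod.smul_snd, Matrix.smul_mul, Matrix.mul_smul, smul_sub, smul_add,
      RingHom.id_apply, Prod.smul_mk]

variable {A A' : Matrix (Fin n) (Fin n) ℝ} {B : Matrix (Fin n) (Fin 1) ℝ}

theorem feedbackMap_apply_eq_iff {T : Matrix (Fin n) (Fin n) ℝ} {K : Matrix (Fin 1) (Fin n) ℝ} :
    feedbackMap A A' B (T, K) = (0, B) ↔ T * A + B * K = A' * T ∧ T * B = B := by
  simp [feedbackMap, sub_eq_zero]

theorem feedbackMap_injective (hA : IsControllable A B) (hA' : IsControllable A' B) :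
    Function.Injective (feedbackMap A A' B) := by
  rw [← LinearMap.ker_eq_bot, LinearMap.ker_eq_bot']
  rintro ⟨T, K⟩ h
  obtain ⟨hTK, hTB⟩ : T * A + B * K = A' * T ∧ T * B = 0 := by
    simpa [feedbackMap, sub_eq_zero] using h
  set e : ℕ → Fin n → ℝ := fun j => (toLin' A ^ j) (B.col 0)
  set v : ℕ → Fin n → ℝ := fun j => T *ᵥ e j
  set k : ℕ → ℝ := fun j => (K *ᵥ e j) 0
  have hv0 : v 0 = 0 := congrArg (fun M => M.col 0) hTB
  have hv : ∀ j, v (j + 1) = toLin' A' (v j) - k j • B.col 0 := by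
    intro j
    simp only [v, e, k, pow_succ', Module.End.mul_apply, toLin'_apply]
    rw [mulVec_mulVec, eq_sub_of_add_eq hTK, sub_mulVec, ← mulVec_mulVec, ← mulVec_mulVec,
      mulVec_eq_smul_col_zero]
  have hvn : v n ∈ span ℝ (v '' Set.Iio n) := by
    have hspan : span ℝ (v '' Set.Iio n) =
        (krylovSubspace (toLin' A) (B.col 0) n).map T.mulVecLin := by
      rw [krylovSubspace, map_span, Set.image_image]
      rfl
    rw [hspan, hA.krylovSubspace_eq_top, Submodule.map_top]
    exact ⟨e n, rfl⟩
  have hk := forall_lt_eq_zero_of_mem_span (fun m hm => hA'.pow_apply_notMem_krylovSubspace hm)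
    hv0 hv hvn
  refine Prod.mk_eq_zero.mpr ⟨hA.eq_zero_of_mulVec_eq_zero fun j hj =>
    eq_zero_of_forall_lt_eq_zero hv0 hv hk j hj.le, hA.eq_zero_of_mulVec_eq_zero fun j hj => ?_⟩
  ext i
  rw [Subsingleton.elim i 0]
  exact hk j hj

theorem feedbackMap_bijective (hA : IsControllable A B) (hA' : IsControllable A' B) :
    Function.Bijective (feedbackMap A A' B) := by
  refine ⟨feedbackMap_injective hA hA', ?_⟩
  refine (LinearMap.injective_iff_surjective_of_finrank_eq_finrank ?_).mp
    (feedbackMap_injective hA hA')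
  simp only [Module.finrank_prod, Module.finrank_matrix, Fintype.card_fin, Module.finrank_self]
  ring

end Feedback

theorem stmt_0 {n : ℕ} (A Atil : Matrix (Fin n) (Fin n) ℝ) (B : Matrix (Fin n) (Fin 1) ℝ)
    (hAB : IsControllable A B) (hAtilB : IsControllable Atil B) :
    ∃! TK : Matrix (Fin n) (Fin n) ℝ × Matrix (Fin 1) (Fin n) ℝ,
      IsUnit TK.1 ∧ TK.1 * A + B * TK.2 = Atil * TK.1 ∧ TK.1 * B = B := by
  have hbij := feedbackMap_bijective hAB hAtilB
  obtain ⟨⟨T, K⟩, hTK⟩ := hbij.surjective (0, B)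
  obtain ⟨hfeedback, hTB⟩ := feedbackMap_apply_eq_iff.mp hTK
  refine ⟨(T, K), ⟨hAtilB.isUnit_of_feedback hfeedback hTB, hfeedback, hTB⟩, ?_⟩
  rintro ⟨T', K'⟩ ⟨-, hsol⟩
  exact hbij.injective ((feedbackMap_apply_eq_iff.mpr hsol).trans hTK.symm)
end

section
/- For every positive integer m, the absolute value of the sum over k ∈ ℤ of (1/3)·1/((2k+1−2m)(2m+2k+1)) is strictly less than π²/4 − 1/3. -/
/-!
The sum is in fact zero. By partial fractions,
`1 / ((2k+1-2m)(2k+1+2m)) = (1/(4m)) (a k - a (k + 2m))` with `a k = 1 / (2k+1-2m)`,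
so over `k ∈ ℕ` the series telescopes to `∑_{i<2m} a i`, which vanishes because
`i ↦ 2m-1-i` negates `2i+1-2m`. The summand is invariant under `k ↦ -k-1`, so the sum over `ℤ`
is twice the sum over `ℕ`, i.e. zero, and `0 < π²/4 - 1/3` since `π > 3`.
-/

open Filter Finset Topology

theorem Finset.sum_range_sub_add {G : Type*} [AddCommGroup G] (a : ℕ → G) (n N : ℕ) :
    ∑ k ∈ range N, (a k - a (k + n)) = ∑ i ∈ range n, a i - ∑ i ∈ range n, a (N + i) := by
  have hN := sum_range_add a N n
  have hn := sum_range_add a n N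
  rw [add_comm n N] at hn
  simp only [sum_sub_distrib, add_comm _ n]
  linear_combination (norm := abel) hn - hN

theorem hasSum_sub_add_of_tendsto_zero {G : Type*} [AddCommGroup G] [TopologicalSpace G]
    [IsTopologicalAddGroup G] [T2Space G] {a : ℕ → G} (n : ℕ) (ha : Tendsto a atTop (𝓝 0))
    (hs : Summable fun k ↦ a k - a (k + n)) :
    HasSum (fun k ↦ a k - a (k + n)) (∑ i ∈ range n, a i) := by
  rw [hs.hasSum_iff_tendsto_nat]
  simp_rw [sum_range_sub_add]
  have htail : Tendsto (fun N ↦ ∑ i ∈ range n, a (N + i)) atTop (𝓝 0) := by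
    simpa using tendsto_finsetSum (range n) fun i _ ↦ ha.comp (tendsto_add_atTop_nat i)
  simpa using htail.const_sub (∑ i ∈ range n, a i)

theorem Finset.sum_range_odd_comp_eq_zero {R M : Type*} [Ring R] [AddCommGroup M]
    [IsAddTorsionFree M] {g : R → M} (hg : g.Odd) (n : ℕ) :
    ∑ i ∈ range n, g (2 * i + 1 - n) = 0 := by
  rw [← self_eq_neg, ← sum_neg_distrib, ← sum_range_reflect]
  refine sum_congr rfl fun i hi ↦ ?_
  have hi : i + 1 ≤ n := mem_range.mp hi
  rw [← hg, Nat.sub_sub, add_comm 1 i, Nat.cast_sub hi]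
  congr 1
  push_cast
  noncomm_ring

theorem summable_one_div_odd_sq_sub (c : ℝ) :
    Summable fun k : ℕ ↦ 1 / ((2 * (k : ℝ) + 1) ^ 2 - c) := by
  refine Summable.of_norm_bounded_eventually_nat
    (Real.summable_one_div_nat_pow.mpr one_lt_two) ?_
  filter_upwards [eventually_ge_atTop (⌈c⌉₊ + 1)] with k hk
  have hk₁ : (1 : ℝ) ≤ k := by exact_mod_cast (Nat.le_add_left 1 _).trans hk
  have hkc : c + 1 ≤ k := by
    have := Nat.le_ceil c
    have : ((⌈c⌉₊ + 1 : ℕ) : ℝ) ≤ k := by exact_mod_cast hk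
    push_cast at this
    linarith
  have hpos : 0 < (k : ℝ) ^ 2 := by positivity
  have hle : (k : ℝ) ^ 2 ≤ (2 * k + 1) ^ 2 - c := by nlinarith
  rw [Real.norm_eq_abs, abs_of_pos (one_div_pos.mpr (hpos.trans_le hle))]
  gcongr

theorem hasSum_nat_one_div_odd_sub_mul_odd_add (m : ℕ) (hm : 0 < m) :
    HasSum (fun k : ℕ ↦ 1 / ((2 * (k : ℝ) + 1 - 2 * m) * (2 * m + 2 * k + 1))) 0 := by
  set t : ℕ → ℝ := fun k ↦ 1 / ((2 * (k : ℝ) + 1 - 2 * m) * (2 * m + 2 * k + 1))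
  set a : ℕ → ℝ := fun k ↦ 1 / (2 * (k : ℝ) + 1 - 2 * m)
  have h4m : (4 * m : ℝ) ≠ 0 := by positivity
  have hpartial : ∀ k : ℕ, a k - a (k + 2 * m) = 4 * m * t k := by
    intro k
    have h₁ : (2 * (k : ℝ) + 1 - 2 * m) ≠ 0 := by
      intro h
      have : (2 * (k : ℤ) + 1 - 2 * m : ℤ) = 0 := by exact_mod_cast h
      omega
    have h₂ : 2 * ((k : ℝ) + 2 * m) + 1 - 2 * m ≠ 0 := by
      have : (0 : ℝ) ≤ k := k.cast_nonneg
      linarith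
    simp only [a, t]
    push_cast
    field_simp
    ring
  have ht : Summable t := by
    convert summable_one_div_odd_sq_sub ((2 * m) ^ 2) using 3 with k
    ring
  have ha : Tendsto a atTop (𝓝 0) := by
    have h : Tendsto (fun k : ℕ ↦ 2 * (k : ℝ) + (1 - 2 * m)) atTop atTop :=
      tendsto_atTop_add_const_right _ _
        (tendsto_natCast_atTop_atTop.const_mul_atTop two_pos)
    refine tendsto_const_nhds.div_atTop (h.congr fun k ↦ ?_)
    ring
  have hboundary : ∑ i ∈ range (2 * m), a i = 0 := by
    simpa [a] using sum_range_odd_comp_eq_zero (g := fun x : ℝ ↦ 1 / x)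
      one_div_neg_eq_neg_one_div (2 * m)
  have h := hasSum_sub_add_of_tendsto_zero (2 * m) ha
    (by simp_rw [hpartial]; exact ht.mul_left _)
  rw [hboundary] at h
  simp_rw [hpartial] at h
  simpa only [inv_mul_cancel_left₀ h4m, mul_zero] using h.mul_left (4 * m : ℝ)⁻¹

theorem hasSum_one_div_odd_sub_mul_odd_add (m : ℕ) (hm : 0 < m) :
    HasSum (fun k : ℤ ↦ 1 / ((2 * (k : ℝ) + 1 - 2 * m) * (2 * m + 2 * k + 1))) 0 := by
  have hnat := hasSum_nat_one_div_odd_sub_mul_odd_add m hm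
  have h := HasSum.of_nat_of_neg_add_one (m := 0) (m' := 0)
    (f := fun k : ℤ ↦ 1 / ((2 * (k : ℝ) + 1 - 2 * m) * (2 * m + 2 * k + 1)))
    (by simpa using hnat) (by convert hnat using 3 with n; push_cast; ring)
  simpa using h

theorem stmt_3 (m : ℤ) (hm : 0 < m) :
    |∑' k : ℤ, (1 / 3 : ℝ) *
        (1 / ((2 * (k : ℝ) + 1 - 2 * (m : ℝ)) * (2 * (m : ℝ) + 2 * (k : ℝ) + 1)))| <
      Real.pi ^ 2 / 4 - 1 / 3 := by
  lift m to ℕ using hm.le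
  have h := (hasSum_one_div_odd_sub_mul_odd_add m (by exact_mod_cast hm)).mul_left (1 / 3)
  push_cast
  rw [h.tsum_eq, mul_zero, abs_zero]
  nlinarith [Real.pi_gt_three]
end
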